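/- Let n ≥ 1, let ρ be a 2ⁿ×2ⁿ complex matrix with tr(ρ) = 1, and let O be a 2ⁿ×2ⁿ real symmetric matrix (O has real entries and Oᵀ = O), both indexed by bit strings in {0,1}ⁿ. Then tr(ρ O) = (2^{2n−1}/|ℬₙ|) Σ_{A ∈ ℬₙ} ⟨φ^{req}_A| ρ |φ^{req}_A⟩ ⟨φ^{req}_A| O |φ^{req}_A⟩ + Σ_{x ∈ {0,1}ⁿ} ρ_{xx} O_{xx} − (1/2) tr(O), where ⟨φ|M|φ⟩ := φ† M φ. -/

import Mathlib

/-!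
Expanding both sandwiches turns the sum over `ℬₙ` into a fourth moment: for bit strings
`x, y, u, v` one needs `∑_A (-1)^(q_A x + q_A y + q_A u + q_A v)`. Modulo 2 the exponent is
`∑_{i,j} a_{ij} c_{ij}` with `c = x xᵀ + y yᵀ + u uᵀ + v vᵀ` over `𝔽₂`; flipping one entry
`a_{ij}` (`i ≤ j`) with `c_{ij} = 1` is a sign-reversing involution of `ℬₙ`, so the sum is `|ℬₙ|`
if `c = 0` and `0` otherwise. Over `𝔽₂`, `c = 0` means that `x, y, u, v` coincide in pairs: the
diagonal gives `v = x + y + u`, and then `(x + y)(x + u)ᵀ` is symmetric, so `x + y = 0`,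
`x + u = 0` or `y = u`. Summing `f_{xy} g_{uv}` over pairings gives
`tr f tr g + tr (f gᵀ) + tr (f g) - 2 ∑ₓ f_{xx} g_{xx}`, and `Oᵀ = O` finishes the computation.
-/

open Finset Matrix

/-- Bit strings of length `n`, with entries viewed as `0/1` integers via `Fin 2`. -/
abbrev Bits (n : ℕ) := Fin n → Fin 2

open Classical in
/-- The index set `ℬₙ`: upper-triangular `n × n` matrices with entries in `{0,1}`
(`a_{ij} = 0` for `i > j`). -/
noncomputable def Bn (n : ℕ) : Finset (Matrix (Fin n) (Fin n) (Fin 2)) :=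
  Finset.univ.filter fun A => ∀ i j : Fin n, j < i → A i j = 0

/-- The quadratic form `xᵀ A x` (its parity is what matters). -/
def quadB {n : ℕ} (A : Matrix (Fin n) (Fin n) (Fin 2)) (x : Bits n) : ℕ :=
  ∑ i, ∑ j, (A i j : ℕ) * (x i : ℕ) * (x j : ℕ)

/-- The real equatorial stabilizer state `φ^{req}_A`. -/
noncomputable def phiReq {n : ℕ} (A : Matrix (Fin n) (Fin n) (Fin 2)) (x : Bits n) : ℂ :=
  (-1 : ℂ) ^ quadB A x / (Real.sqrt (2 ^ n) : ℂ)

/-- The sandwich `⟨φ|M|φ⟩ = φ† M φ`. -/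
noncomputable def braket {ι : Type*} [Fintype ι] (φ : ι → ℂ) (M : Matrix ι ι ℂ) : ℂ :=
  star φ ⬝ᵥ (M *ᵥ φ)

theorem neg_one_pow_eq_neg_of_natCast_eq_add_one {R : Type*} [Ring R] {m k : ℕ}
    (h : (m : ZMod 2) = k + 1) : (-1 : R) ^ m = -(-1) ^ k := by
  rw [← Nat.cast_succ, ZMod.natCast_eq_natCast_iff'] at h
  rw [neg_one_pow_eq_pow_mod_two, h, ← neg_one_pow_eq_pow_mod_two, pow_succ, mul_neg_one]

def PairsUp {α : Type*} (x y u v : α) : Prop :=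
  (x = y ∧ u = v) ∨ (x = u ∧ y = v) ∨ (x = v ∧ y = u)

instance {α : Type*} [DecidableEq α] (x y u v : α) : Decidable (PairsUp x y u v) :=
  inferInstanceAs (Decidable (_ ∨ _ ∨ _))

theorem PairsUp.of_map {α β : Type*} {f : α → β} (hf : Function.Injective f) {x y u v : α}
    (h : PairsUp (f x) (f y) (f u) (f v)) : PairsUp x y u v := by
  simpa only [PairsUp, hf.eq_iff] using h

-- Any two of the three pairings force `x = y = u = v`.
theorem ite_pairsUp {ι R : Type*} [DecidableEq ι] [CommRing R] (x y u v : ι) (c : R) :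
    (if PairsUp x y u v then c else 0) =
      (if x = y ∧ u = v then c else 0) + (if x = u ∧ y = v then c else 0) +
        (if x = v ∧ y = u then c else 0) - 2 * if x = y ∧ x = u ∧ x = v then c else 0 := by
  unfold PairsUp
  split_ifs <;> grind

theorem sum_ite_pairsUp {ι R : Type*} [Fintype ι] [DecidableEq ι] [CommRing R]
    (f g : Matrix ι ι R) :
    ∑ x, ∑ y, ∑ u, ∑ v, (if PairsUp x y u v then f x y * g u v else 0) =
      f.trace * g.trace + (f * gᵀ).trace + (f * g).trace - 2 * ∑ x, f x x * g x x := by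
  simp only [ite_pairsUp, sum_add_distrib, sum_sub_distrib, ← mul_sum, ite_and]
  simp [trace, mul_apply, sum_mul_sum]

theorem braket_eq_sum {ι : Type*} [Fintype ι] (φ : ι → ℂ) (M : Matrix ι ι ℂ) :
    braket φ M = ∑ x, ∑ y, star (φ x) * φ y * M x y := by
  simp only [braket, dotProduct, mulVec, Pi.star_apply, mul_sum]
  exact sum_congr rfl fun x _ => sum_congr rfl fun y _ => by ring

theorem sum_braket_mul_braket {α ι : Type*} [Fintype ι] (s : Finset α) (φ : α → ι → ℂ)
    (f g : Matrix ι ι ℂ) :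
    ∑ a ∈ s, braket (φ a) f * braket (φ a) g =
      ∑ x, ∑ y, ∑ u, ∑ v,
        (∑ a ∈ s, star (φ a x) * φ a y * star (φ a u) * φ a v) * (f x y * g u v) := by
  simp only [braket_eq_sum, sum_mul]
  simp only [mul_sum]
  rw [sum_comm]; refine sum_congr rfl fun x _ => ?_
  rw [sum_comm]; refine sum_congr rfl fun y _ => ?_
  rw [sum_comm]; refine sum_congr rfl fun u _ => ?_
  rw [sum_comm]; exact sum_congr rfl fun v _ => sum_congr rfl fun a _ => by ring

theorem eq_zero_or_exists_eq_smul_of_vecMulVec_comm {ι K : Type*} [Field K] {a b : ι → K}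
    (h : vecMulVec a b = vecMulVec b a) : a = 0 ∨ ∃ c : K, b = c • a := by
  refine or_iff_not_imp_left.mpr fun ha => ?_
  obtain ⟨i, hi⟩ := Function.ne_iff.mp ha
  refine ⟨b i / a i, funext fun j => ?_⟩
  have hij := congrFun (congrFun h i) j
  simp only [vecMulVec_apply] at hij
  rw [Pi.smul_apply, smul_eq_mul, div_mul_eq_mul_div, eq_div_iff hi]
  linear_combination hij

theorem ZMod.two_eq_zero_or_eq_zero_or_eq_of_vecMulVec_comm {ι : Type*} {a b : ι → ZMod 2}
    (h : vecMulVec a b = vecMulVec b a) : a = 0 ∨ b = 0 ∨ a = b := by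
  rcases eq_zero_or_exists_eq_smul_of_vecMulVec_comm h with ha | ⟨c, rfl⟩
  · exact .inl ha
  · obtain rfl | rfl := (by decide : ∀ c : ZMod 2, c = 0 ∨ c = 1) c
    all_goals simp

theorem ZMod.two_pairsUp_of_vecMulVec_add_eq_zero {ι : Type*} {x y u v : ι → ZMod 2}
    (h : vecMulVec x x + vecMulVec y y + vecMulVec u u + vecMulVec v v = 0) :
    PairsUp x y u v := by
  have hv : v = x + y + u := funext fun i => by
    have hii : x i + y i + u i + v i = 0 := by
      simpa [vecMulVec_apply, ← sq, ZMod.pow_card] using congrFun (congrFun h i) i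
    exact (CharTwo.add_eq_zero.mp hii).symm
  subst hv
  have hsymm : vecMulVec (x + y) (x + u) = vecMulVec (x + u) (x + y) := by
    ext i j
    have hij := congrFun (congrFun h i) j
    simp only [Matrix.add_apply, vecMulVec_apply, Matrix.zero_apply, Pi.add_apply] at hij ⊢
    linear_combination (norm := skip) hij
    ring_nf
    reduce_mod_char
  unfold PairsUp
  simp only [funext_iff, Pi.add_apply]
  rcases ZMod.two_eq_zero_or_eq_zero_or_eq_of_vecMulVec_comm hsymm with h | h | h <;>
    simp only [funext_iff, Pi.add_apply, Pi.zero_apply] at h <;> grind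

-- `Fin 2` has no global ring structure, so the `𝔽₂`-linear algebra takes place in `ZMod 2`.
def bitCast : Fin 2 →+ ZMod 2 where
  toFun a := (a : ℕ)
  map_zero' := rfl
  map_add' := by decide

@[simp]
theorem bitCast_one : bitCast 1 = 1 := rfl

theorem bitCast_injective : Function.Injective bitCast := by decide

section

variable {n : ℕ}

theorem natCast_quadB (A : Matrix (Fin n) (Fin n) (Fin 2)) (x : Bits n) :
    ((quadB A x : ℕ) : ZMod 2) = ∑ i, ∑ j, bitCast (A i j) * bitCast (x i) * bitCast (x j) := by
  simp only [quadB, Nat.cast_sum, Nat.cast_mul]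
  rfl

theorem natCast_quadB_add_single (A : Matrix (Fin n) (Fin n) (Fin 2)) (x : Bits n)
    (i j : Fin n) :
    ((quadB (A + Matrix.single i j 1) x : ℕ) : ZMod 2) =
      quadB A x + bitCast (x i) * bitCast (x j) := by
  simp only [natCast_quadB, Matrix.add_apply, map_add, add_mul, sum_add_distrib,
    Matrix.single_apply, ite_and]
  simp [apply_ite bitCast]

theorem add_single_mem_Bn {A : Matrix (Fin n) (Fin n) (Fin 2)} (hA : A ∈ Bn n) {i j : Fin n}
    (hij : i ≤ j) (c : Fin 2) : A + Matrix.single i j c ∈ Bn n := by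
  simp only [Bn, mem_filter, mem_univ, true_and] at hA ⊢
  intro k l hlk
  rw [Matrix.add_apply, hA k l hlk, zero_add]
  exact Matrix.single_apply_of_ne _ _ _ _ _ (by rintro ⟨rfl, rfl⟩; exact hlk.not_ge hij)

def quadSum (A : Matrix (Fin n) (Fin n) (Fin 2)) (x y u v : Bits n) : ℕ :=
  quadB A x + quadB A y + quadB A u + quadB A v

theorem sum_neg_one_pow_quadSum_of_pairsUp {x y u v : Bits n} (h : PairsUp x y u v) :
    ∑ A ∈ Bn n, (-1 : ℂ) ^ quadSum A x y u v = #(Bn n) := by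
  have hEven : ∀ A, Even (quadSum A x y u v) := by
    unfold quadSum
    rcases h with ⟨rfl, rfl⟩ | ⟨rfl, rfl⟩ | ⟨rfl, rfl⟩ <;> intro A
    · exact ⟨quadB A x + quadB A u, by ring⟩
    · exact ⟨quadB A x + quadB A y, by ring⟩
    · exact ⟨quadB A x + quadB A y, by ring⟩
  simp [(hEven _).neg_one_pow]

def bitGram (x y u v : Bits n) : Matrix (Fin n) (Fin n) (ZMod 2) :=
  vecMulVec (bitCast ∘ x) (bitCast ∘ x) + vecMulVec (bitCast ∘ y) (bitCast ∘ y) +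
    vecMulVec (bitCast ∘ u) (bitCast ∘ u) + vecMulVec (bitCast ∘ v) (bitCast ∘ v)

theorem bitGram_transpose (x y u v : Bits n) : (bitGram x y u v)ᵀ = bitGram x y u v := by
  simp only [bitGram, transpose_add, transpose_vecMulVec]

theorem bitGram_ne_zero {x y u v : Bits n} (h : ¬PairsUp x y u v) : bitGram x y u v ≠ 0 :=
  fun h0 => h (.of_map bitCast_injective.comp_left (ZMod.two_pairsUp_of_vecMulVec_add_eq_zero h0))

theorem exists_le_bitGram_ne_zero {x y u v : Bits n} (h : ¬PairsUp x y u v) :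
    ∃ i j, i ≤ j ∧ bitGram x y u v i j ≠ 0 := by
  obtain ⟨i, j, hij⟩ : ∃ i j, bitGram x y u v i j ≠ 0 := by
    by_contra! h0
    exact bitGram_ne_zero h (Matrix.ext h0)
  rcases le_total i j with hle | hle
  · exact ⟨i, j, hle, hij⟩
  · exact ⟨j, i, hle, by rwa [← bitGram_transpose, transpose_apply] at hij⟩

theorem natCast_quadSum_add_single (A : Matrix (Fin n) (Fin n) (Fin 2)) (x y u v : Bits n)
    (i j : Fin n) :
    ((quadSum (A + Matrix.single i j 1) x y u v : ℕ) : ZMod 2) =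
      quadSum A x y u v + bitGram x y u v i j := by
  push_cast [quadSum, natCast_quadB_add_single]
  simp only [bitGram, Matrix.add_apply, vecMulVec_apply, Function.comp_apply]
  ring

theorem sum_neg_one_pow_quadSum_of_not_pairsUp {x y u v : Bits n} (h : ¬PairsUp x y u v) :
    ∑ A ∈ Bn n, (-1 : ℂ) ^ quadSum A x y u v = 0 := by
  obtain ⟨i, j, hij, hne⟩ := exists_le_bitGram_ne_zero h
  have hodd := (by decide : ∀ c : ZMod 2, c ≠ 0 → c = 1) _ hne
  refine sum_involution (fun A _ => A + Matrix.single i j 1) (fun A _ => ?_)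
    (fun A _ _ hfix => ?_) (fun A hA => add_single_mem_Bn hA hij 1) (fun A _ => ?_)
  · have hparity := natCast_quadSum_add_single A x y u v i j
    rw [hodd] at hparity
    rw [neg_one_pow_eq_neg_of_natCast_eq_add_one hparity, add_neg_cancel]
  · simpa using congrFun (congrFun hfix i) j
  · rw [add_assoc, ← Matrix.single_add]
    simp

theorem sum_neg_one_pow_quadSum (x y u v : Bits n) :
    ∑ A ∈ Bn n, (-1 : ℂ) ^ quadSum A x y u v =
      if PairsUp x y u v then (#(Bn n) : ℂ) else 0 := by
  split_ifs with h
  exacts [sum_neg_one_pow_quadSum_of_pairsUp h, sum_neg_one_pow_quadSum_of_not_pairsUp h]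

theorem star_phiReq (A : Matrix (Fin n) (Fin n) (Fin 2)) (x : Bits n) :
    star (phiReq A x) = phiReq A x := by
  simp [phiReq, Complex.conj_ofReal]

theorem phiReq_mul_phiReq (A : Matrix (Fin n) (Fin n) (Fin 2)) (x y : Bits n) :
    phiReq A x * phiReq A y = (-1) ^ (quadB A x + quadB A y) / 2 ^ n := by
  rw [phiReq, phiReq, div_mul_div_comm, ← pow_add, ← Complex.ofReal_mul,
    Real.mul_self_sqrt (by positivity)]
  push_cast
  rfl

theorem sum_braket_phiReq_mul_braket (f g : Matrix (Bits n) (Bits n) ℂ) :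
    ∑ A ∈ Bn n, braket (phiReq A) f * braket (phiReq A) g =
      #(Bn n) / 4 ^ n *
        (f.trace * g.trace + (f * gᵀ).trace + (f * g).trace - 2 * ∑ x, f x x * g x x) := by
  rw [sum_braket_mul_braket, ← sum_ite_pairsUp]
  simp only [mul_sum]
  refine sum_congr rfl fun x _ => sum_congr rfl fun y _ => sum_congr rfl fun u _ =>
    sum_congr rfl fun v _ => ?_
  have hmoment : ∀ A, star (phiReq A x) * phiReq A y * star (phiReq A u) * phiReq A v =
      (-1) ^ quadSum A x y u v / 4 ^ n := fun A => by
    rw [star_phiReq, star_phiReq, mul_assoc _ (phiReq A u), phiReq_mul_phiReq, phiReq_mul_phiReq,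
      div_mul_div_comm, ← pow_add, ← mul_pow]
    norm_num [quadSum, add_assoc]
  rw [sum_congr rfl fun A _ => hmoment A, ← sum_div, sum_neg_one_pow_quadSum]
  split_ifs <;> ring

end

theorem respovm_tomography_identity_general (n : ℕ) (hn : 1 ≤ n)
    (ρ O : Matrix (Bits n) (Bits n) ℂ) (hρ : ρ.trace = 1)
    (hOsymm : O.transpose = O) :
    (ρ * O).trace =
      ((2 : ℂ) ^ (2 * n - 1) / ((Bn n).card : ℂ)) *
          (∑ A ∈ Bn n, braket (phiReq A) ρ * braket (phiReq A) O)
        + (∑ x : Bits n, ρ x x * O x x) - (1 / 2 : ℂ) * O.trace := by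
  have hBn : (#(Bn n) : ℂ) ≠ 0 :=
    Nat.cast_ne_zero.mpr (card_ne_zero_of_mem (by simp [Bn] : 0 ∈ Bn n))
  have hpow : (4 : ℂ) ^ n = 2 ^ (2 * n - 1) * 2 := by
    rw [← pow_succ, Nat.sub_add_cancel (by omega), pow_mul]
    norm_num
  rw [sum_braket_phiReq_mul_braket, hOsymm, hρ, hpow]
  field_simp
  ring

/-- the RESPOVM + computational-basis decomposition of `tr(ρ O)` for a
real symmetric observable `O`. -/
theorem respovm_tomography_identity (n : ℕ) (hn : 1 ≤ n)
    (ρ O : Matrix (Bits n) (Bits n) ℂ) (hρ : ρ.trace = 1)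
    (hOreal : ∀ x y : Bits n, (O x y).im = 0) (hOsymm : O.transpose = O) :
    (ρ * O).trace =
      ((2 : ℂ) ^ (2 * n - 1) / ((Bn n).card : ℂ)) *
          (∑ A ∈ Bn n, braket (phiReq A) ρ * braket (phiReq A) O)
        + (∑ x : Bits n, ρ x x * O x x) - (1 / 2 : ℂ) * O.trace :=
  respovm_tomography_identity_general n hn ρ O hρ hOsymm
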